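/- Let k be a field of characteristic 2 and r, s ∈ k. In the polynomial ring k[U,V], the subalgebra B generated by U², V², and W = U(V⁴+sV²)+V(U⁴+rU²) equals the kernel of the k-derivation δ = (U⁴+rU²)·∂/∂U + (V⁴+sV²)·∂/∂V (equivalently, the ring of invariants of the corresponding α₂-action). -/
import Mathlib
set_option synthInstance.maxHeartbeats 1000000
set_option maxHeartbeats 2000000

open MvPolynomial

section Aux
variable {k : Type*} [Field k] [CharP k 2]

lemma two_eq_zero' : (2 : MvPolynomial (Fin 2) k) = 0 := by
  have h2k : (2:k) = 0 := by exact_mod_cast CharP.cast_eq_zero k 2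
  rw [show (2 : MvPolynomial (Fin 2) k) = C (2:k) from (map_ofNat C 2).symm, h2k, map_zero]

lemma add_self' (a : MvPolynomial (Fin 2) k) : a + a = 0 := by
  rw [← two_mul, two_eq_zero', zero_mul]

lemma pd_self (i : Fin 2) (p : MvPolynomial (Fin 2) k) :
    pderiv i (pderiv i p) = 0 := by
  induction p using MvPolynomial.induction_on with
  | C a => simp
  | add p q hp hq => simp [hp, hq]
  | mul_X p j hp =>
    have hc : pderiv i (pderiv i (X j : MvPolynomial (Fin 2) k)) = 0 := by
      by_cases h : j = i
      · subst h; simp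
      · simp [pderiv_X_of_ne h]
    rw [pderiv_mul, map_add, pderiv_mul, pderiv_mul, hp, hc, zero_mul, zero_add, mul_zero,
      add_zero]
    rw [add_self']

omit [CharP k 2] in
lemma pd_comm (i j : Fin 2) (p : MvPolynomial (Fin 2) k) :
    pderiv i (pderiv j p) = pderiv j (pderiv i p) := by
  induction p using MvPolynomial.induction_on with
  | C a => simp
  | add p q hp hq => simp [hp, hq]
  | mul_X p l hp =>
    have hc : ∀ a b : Fin 2, pderiv a (pderiv b (X l : MvPolynomial (Fin 2) k)) = 0 := by
      intro a b
      by_cases h : l = b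
      · subst h; simp
      · simp [pderiv_X_of_ne h]
    simp only [pderiv_mul, map_add, hp, hc, mul_zero, add_zero]
    ring

variable {k : Type*} [Field k] [CharP k 2]

lemma coeff_zero_of_odd (i : Fin 2) (p : MvPolynomial (Fin 2) k)
    (h : pderiv i p = 0) (m : Fin 2 →₀ ℕ) (hodd : ¬ 2 ∣ m i) :
    coeff m p = 0 := by
  by_contra hc
  have hm : m ∈ p.support := mem_support_iff.2 hc
  have hmi : m i ≠ 0 := by intro h0; exact hodd (h0 ▸ dvd_zero 2)
  have hexp : pderiv i p =
      ∑ s ∈ p.support, monomial (s - Finsupp.single i 1) (coeff s p * (s i : k)) := by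
    conv_lhs => rw [p.as_sum]
    rw [map_sum]
    simp [pderiv_monomial]
  have h0 := congrArg (coeff (m - Finsupp.single i 1)) hexp
  rw [h, coeff_zero, coeff_sum] at h0
  simp only [coeff_monomial] at h0
  rw [Finset.sum_eq_single_of_mem m hm] at h0
  · rw [if_pos rfl] at h0
    have : (m i : k) ≠ 0 := by
      rw [Ne, CharP.cast_eq_zero_iff k 2]
      exact hodd
    exact hc (by
      have := h0.symm
      rcases mul_eq_zero.1 this with h1 | h1
      · exact h1
      · exact absurd h1 ‹(m i : k) ≠ 0›)
  · intro s hs hne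
    by_cases h0s : s i = 0
    · simp [h0s]
    · rw [if_neg]
      intro heq
      apply hne
      ext j
      have hj := DFunLike.congr_fun heq j
      rw [Finsupp.tsub_apply, Finsupp.tsub_apply] at hj
      by_cases hji : j = i
      · subst hji
        simp only [Finsupp.single_eq_same] at hj
        omega
      · simpa [Finsupp.single_apply, Ne.symm hji] using hj

lemma mem_adjoin_sq (p : MvPolynomial (Fin 2) k)
    (h0 : pderiv 0 p = 0) (h1 : pderiv 1 p = 0) :
    p ∈ Algebra.adjoin k ({(X 0 : MvPolynomial (Fin 2) k) ^ 2, (X 1) ^ 2} :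
      Set (MvPolynomial (Fin 2) k)) := by
  rw [p.as_sum]
  apply Subalgebra.sum_mem
  intro m hm
  have he0 : 2 ∣ m 0 := by
    by_contra h
    exact (mem_support_iff.1 hm) (coeff_zero_of_odd 0 p h0 m h)
  have he1 : 2 ∣ m 1 := by
    by_contra h
    exact (mem_support_iff.1 hm) (coeff_zero_of_odd 1 p h1 m h)
  obtain ⟨a, ha⟩ := he0
  obtain ⟨b, hb⟩ := he1
  have hmono : (monomial m) (coeff m p) =
      C (coeff m p) * (X 0 : MvPolynomial (Fin 2) k) ^ (m 0) * (X 1) ^ (m 1) := by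
    rw [monomial_eq, Finsupp.prod_fintype, Fin.prod_univ_two, mul_assoc]
    intro i
    exact pow_zero (X i)
  rw [hmono, ha, hb, pow_mul, pow_mul]
  refine mul_mem (mul_mem ?_ ?_) ?_
  · exact Subalgebra.algebraMap_mem _ (coeff m p)
  · exact pow_mem (Algebra.subset_adjoin (Set.mem_insert _ _)) a
  · exact pow_mem (Algebra.subset_adjoin (Set.mem_insert_of_mem _ (Set.mem_singleton _))) b

omit [CharP k 2] in
lemma gen_ne_zero {σ : Type*} (i : σ) (c : k) :
    (X i : MvPolynomial σ k) ^ 4 + C c * (X i) ^ 2 ≠ 0 := by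
  classical
  intro h
  have := congrArg (coeff (Finsupp.single i 4)) h
  rw [coeff_add, coeff_zero, X_pow_eq_monomial, X_pow_eq_monomial, coeff_C_mul,
    coeff_monomial, coeff_monomial, if_pos rfl, if_neg] at this
  · simp at this
  · intro heq
    have := DFunLike.congr_fun heq i
    simp at this


end Aux

/-- In `k[U,V]` with `char k = 2`, the subalgebra generated by `U²`, `V²` and
`W = U(V⁴+sV²) + V(U⁴+rU²)` is precisely the kernel of the `k`-derivation
`δ = (U⁴+rU²)·∂/∂U + (V⁴+sV²)·∂/∂V` (the ring of invariants of the corresponding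
`α₂`-action). -/
theorem stmt11 (k : Type*) [Field k] [CharP k 2] (r s : k)
    (δ : Derivation k (MvPolynomial (Fin 2) k) (MvPolynomial (Fin 2) k))
    (hδ : ∀ p : MvPolynomial (Fin 2) k,
      δ p = ((X 0) ^ 4 + C r * (X 0) ^ 2) * (pderiv 0) p
          + ((X 1) ^ 4 + C s * (X 1) ^ 2) * (pderiv 1) p) :
    ∀ x : MvPolynomial (Fin 2) k, δ x = 0 ↔ x ∈ Algebra.adjoin k
      ({(X 0 : MvPolynomial (Fin 2) k) ^ 2, (X 1) ^ 2,
        X 0 * ((X 1) ^ 4 + C s * (X 1) ^ 2) + X 1 * ((X 0) ^ 4 + C r * (X 0) ^ 2)} :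
        Set (MvPolynomial (Fin 2) k)) := by
  intro x
  have h2 : (2 : MvPolynomial (Fin 2) k) = 0 := two_eq_zero'
  have hadd : ∀ a : MvPolynomial (Fin 2) k, a + a = 0 := add_self'
  set f : MvPolynomial (Fin 2) k := (X 0) ^ 4 + C r * (X 0) ^ 2 with hf
  set g : MvPolynomial (Fin 2) k := (X 1) ^ 4 + C s * (X 1) ^ 2 with hg
  set W : MvPolynomial (Fin 2) k := X 0 * g + X 1 * f with hWdef
  have hfne : f ≠ 0 := gen_ne_zero 0 r
  have hgne : g ≠ 0 := gen_ne_zero 1 s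
  have h4 : (4 : MvPolynomial (Fin 2) k) = 0 := by
    rw [show (4 : MvPolynomial (Fin 2) k) = 2 * 2 by norm_num, h2, zero_mul]
  have hp0f : pderiv 0 f = 0 := by
    rw [hf]
    simp only [map_add, pderiv_pow, pderiv_X_self, pderiv_C_mul, mul_one]
    linear_combination (X 0 : MvPolynomial (Fin 2) k) ^ 3 * h4 + C r * X 0 * h2
  have hp1f : pderiv 1 f = 0 := by
    rw [hf]
    simp [pderiv_X_of_ne (show (0 : Fin 2) ≠ 1 by decide)]
  have hp1g : pderiv 1 g = 0 := by
    rw [hg]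
    simp only [map_add, pderiv_pow, pderiv_X_self, pderiv_C_mul, mul_one]
    linear_combination (X 1 : MvPolynomial (Fin 2) k) ^ 3 * h4 + C s * X 1 * h2
  have hp0g : pderiv 0 g = 0 := by
    rw [hg]
    simp [pderiv_X_of_ne (show (1 : Fin 2) ≠ 0 by decide)]
  have hpW0 : pderiv 0 W = g := by
    rw [hWdef, map_add, pderiv_mul, pderiv_mul, hp0g, hp0f, pderiv_X_self,
      pderiv_X_of_ne (show (1 : Fin 2) ≠ 0 by decide)]
    ring
  have hpW1 : pderiv 1 W = f := by
    rw [hWdef, map_add, pderiv_mul, pderiv_mul, hp1g, hp1f, pderiv_X_self,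
      pderiv_X_of_ne (show (0 : Fin 2) ≠ 1 by decide)]
    ring
  constructor
  · intro hx
    have h0 : f * pderiv 0 x + g * pderiv 1 x = 0 := (hδ x).symm.trans hx
    have heq : f * pderiv 0 x = g * pderiv 1 x := by
      linear_combination h0 - g * pderiv 1 x * h2
    set e := MvPolynomial.finSuccEquiv k 1 with he
    have hX1 : (X 1 : MvPolynomial (Fin 2) k) = X (Fin.succ 0) := rfl
    have hef : e f = Polynomial.X ^ 4 + Polynomial.C (C r) * Polynomial.X ^ 2 := by
      rw [hf]
      simp [he, finSuccEquiv_apply]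
    have heg : e g =
        Polynomial.C ((X 0 : MvPolynomial (Fin 1) k) ^ 4 + C s * (X 0) ^ 2) := by
      rw [hg, hX1]
      simp only [he, map_add, map_mul, map_pow, finSuccEquiv_X_succ]
      have hC : (MvPolynomial.finSuccEquiv k 1) (C s) = Polynomial.C (C s) := by
        simp [finSuccEquiv_apply]
      rw [hC]
    set F := Polynomial.X ^ 4 +
      Polynomial.C (C r : MvPolynomial (Fin 1) k) * Polynomial.X ^ 2 with hF
    set G := (X 0 : MvPolynomial (Fin 1) k) ^ 4 + C s * (X 0) ^ 2 with hG
    have hFmonic : F.Monic := by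
      apply Polynomial.monic_X_pow_add
      refine lt_of_le_of_lt (Polynomial.degree_C_mul_X_pow_le 2 _) ?_
      decide
    have hGne : G ≠ 0 := gen_ne_zero 0 s
    have hFA : F * e (pderiv 0 x) = Polynomial.C G * e (pderiv 1 x) := by
      have h' := congrArg e heq
      rw [map_mul, map_mul, hef, heg] at h'
      exact h'
    have hmod : e (pderiv 1 x) %ₘ F = 0 := by
      have h1 : (Polynomial.C G * e (pderiv 1 x)) %ₘ F = 0 :=
        (Polynomial.modByMonic_eq_zero_iff_dvd hFmonic).2 ⟨e (pderiv 0 x), hFA.symm⟩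
      rw [← Polynomial.smul_eq_C_mul, Polynomial.smul_modByMonic,
        Polynomial.smul_eq_C_mul] at h1
      rcases mul_eq_zero.1 h1 with h | h
      · exact absurd (Polynomial.C_eq_zero.mp h) hGne
      · exact h
    obtain ⟨D, hD⟩ := (Polynomial.modByMonic_eq_zero_iff_dvd hFmonic).1 hmod
    set d := e.symm D with hd
    have heD : e d = D := e.apply_symm_apply D
    have hxV : pderiv 1 x = f * d := by
      apply e.injective
      rw [map_mul, hef, hD, heD]
    have hxU : pderiv 0 x = g * d := by
      apply e.injective
      rw [map_mul, heg, heD]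
      have hAD : F * e (pderiv 0 x) = F * (Polynomial.C G * D) := by
        rw [hFA, hD]; ring
      exact mul_left_cancel₀ hFmonic.ne_zero hAD
    have hd0 : pderiv 0 d = 0 := by
      have h1 : pderiv 0 (pderiv 0 x) = 0 := pd_self 0 x
      rw [hxU, pderiv_mul, hp0g, zero_mul, zero_add] at h1
      exact (mul_eq_zero.1 h1).resolve_left hgne
    have hd1 : pderiv 1 d = 0 := by
      have h1 : g * pderiv 1 d = 0 := by
        have hc : pderiv 1 (pderiv 0 x) = pderiv 0 (pderiv 1 x) := pd_comm 1 0 x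
        rw [hxU, hxV, pderiv_mul, pderiv_mul, hp1g, hp0f, hd0] at hc
        linear_combination hc
      exact (mul_eq_zero.1 h1).resolve_left hgne
    have hdmem := mem_adjoin_sq d hd0 hd1
    have hy0 : pderiv 0 (x - d * W) = 0 := by
      rw [map_sub, pderiv_mul, hd0, hpW0, hxU, zero_mul, zero_add, mul_comm g d,
        sub_self]
    have hy1 : pderiv 1 (x - d * W) = 0 := by
      rw [map_sub, pderiv_mul, hd1, hpW1, hxV, zero_mul, zero_add, mul_comm f d,
        sub_self]
    have hymem := mem_adjoin_sq (x - d * W) hy0 hy1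
    have hsub : Algebra.adjoin k ({(X 0 : MvPolynomial (Fin 2) k) ^ 2, (X 1) ^ 2} :
        Set (MvPolynomial (Fin 2) k)) ≤
        Algebra.adjoin k ({(X 0 : MvPolynomial (Fin 2) k) ^ 2, (X 1) ^ 2, W} :
        Set (MvPolynomial (Fin 2) k)) := by
      apply Algebra.adjoin_mono
      intro t ht
      simp only [Set.mem_insert_iff, Set.mem_singleton_iff] at ht ⊢
      tauto
    have hWmem : W ∈ Algebra.adjoin k ({(X 0 : MvPolynomial (Fin 2) k) ^ 2,
        (X 1) ^ 2, W} : Set (MvPolynomial (Fin 2) k)) :=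
      Algebra.subset_adjoin (Set.mem_insert_of_mem _ (Set.mem_insert_of_mem _
        (Set.mem_singleton _)))
    have hx' : x = (x - d * W) + d * W := by ring
    rw [hx']
    exact add_mem (hsub hymem) (mul_mem (hsub hdmem) hWmem)
  · intro hx
    induction hx using Algebra.adjoin_induction with
    | mem t ht =>
      simp only [Set.mem_insert_iff, Set.mem_singleton_iff] at ht
      rcases ht with h | h | h <;> subst h
      · have e0 : pderiv 0 ((X 0 : MvPolynomial (Fin 2) k) ^ 2) = 0 := by
          rw [sq, pderiv_mul, pderiv_X_self, one_mul, mul_one, hadd]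
        have e1 : pderiv 1 ((X 0 : MvPolynomial (Fin 2) k) ^ 2) = 0 := by
          rw [sq, pderiv_mul, pderiv_X_of_ne (show (0 : Fin 2) ≠ 1 by decide)]
          ring
        rw [hδ, e0, e1, mul_zero, mul_zero, add_zero]
      · have e0 : pderiv 0 ((X 1 : MvPolynomial (Fin 2) k) ^ 2) = 0 := by
          rw [sq, pderiv_mul, pderiv_X_of_ne (show (1 : Fin 2) ≠ 0 by decide)]
          ring
        have e1 : pderiv 1 ((X 1 : MvPolynomial (Fin 2) k) ^ 2) = 0 := by
          rw [sq, pderiv_mul, pderiv_X_self, one_mul, mul_one, hadd]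
        rw [hδ, e0, e1, mul_zero, mul_zero, add_zero]
      · rw [hδ, hpW0, hpW1, mul_comm g f, hadd]
    | algebraMap r => exact Derivation.map_algebraMap δ r
    | add a b ha hb hA hB => rw [map_add, hA, hB, add_zero]
    | mul a b ha hb hA hB => rw [Derivation.leibniz, hA, hB, smul_zero, smul_zero, add_zero]
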